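/- (Statistical second law.) In the setting of the classical Fundamental Theorem—system density f_A on (X, μ); reservoirs (Y_i, ν_i) with Hamiltonians H_i, inverse temperatures β_i > 0, canonical initial densities g_i = Z_i⁻¹ e^{-β_i H_i}; initial joint density the product f_A ⊗ g_1 ⊗ ⋯ ⊗ g_m; measure-preserving measurable equivalence Φ of the product space; final joint density f₁ with marginals f_A', g_i'; heats Q_i = ∫ H_i g_i dν_i - ∫ H_i g_i' dν_i; and all the relevant entropy and energy integrals finite—suppose additionally the process is cyclic, i.e., f_A' = f_A μ-almost everywhere. Then ∑_{i=1}^m β_i Q_i ≤ 0; that is, the sum over reservoirs of (expected heat gained)/(temperature) is not positive for any cyclic process. -/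

import Mathlib

/-!
Liouville's theorem (`Φ` preserves the measure) keeps the Gibbs entropy of the joint density
constant, and for the initial product density it is the sum of the entropies of the factors.
By Gibbs' inequality against the product of its marginals, the entropy of the final joint
density is at most the sum of the marginal entropies. In a cyclic process the system's entropy
is restored, so the total entropy of the reservoirs cannot decrease. On the other hand the
canonical density minimises the free energy `β ⟨H⟩ - S`, which gives `β_i Q_i ≤ S[g_i] - S[g_i']`
for every reservoir; summing over the reservoirs yields `∑ β_i Q_i ≤ 0`.
-/

open MeasureTheory Real

theorem Set.indicator_one_mul {α : Type*} (s : Set α) (f : α → ℝ) (x : α) :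
    s.indicator (fun _ => (1 : ℝ)) x * f x = s.indicator f x := by
  by_cases hx : x ∈ s <;> simp [hx]

theorem sub_le_mul_log_sub_mul_log {a b : ℝ} (ha : 0 ≤ a) (hb : 0 < b) :
    a - b ≤ a * log a - a * log b := by
  rcases ha.eq_or_lt with rfl | ha
  · simpa using hb.le
  · have h := mul_le_mul_of_nonneg_left (log_le_sub_one_of_pos (div_pos hb ha)) ha.le
    have hba : a * (b / a - 1) = b - a := by field_simp
    rw [log_div hb.ne' ha.ne', hba] at h
    linarith

section Density

variable {Ω Ω' : Type*} [MeasurableSpace Ω] [MeasurableSpace Ω']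

structure IsProbDensity (P : Measure Ω) (f : Ω → ℝ) : Prop where
  measurable : Measurable f
  nonneg : ∀ w, 0 ≤ f w
  integrable : Integrable f P
  integral_eq_one : ∫ w, f w ∂P = 1

/-- Since `Real.log 0 = 0`, this uses the convention `0 log 0 = 0`; it is `0` when
`f log f` is not integrable, so statements about it carry integrability hypotheses. -/
noncomputable def entropy (P : Measure Ω) (f : Ω → ℝ) : ℝ := -∫ w, f w * log (f w) ∂P

variable {P : Measure Ω} {f q : Ω → ℝ}

theorem IsProbDensity.integral_mul_log_le (hf : IsProbDensity P f) (hq : IsProbDensity P q)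
    (hsupp : ∀ᵐ w ∂P, 0 < f w → 0 < q w) (hSf : Integrable (fun w => f w * log (f w)) P)
    (hfq : Integrable (fun w => f w * log (q w)) P) :
    ∫ w, f w * log (q w) ∂P ≤ ∫ w, f w * log (f w) ∂P := by
  have hpt : ∀ᵐ w ∂P, f w - q w ≤ f w * log (f w) - f w * log (q w) := by
    filter_upwards [hsupp] with w hw
    rcases (hf.nonneg w).eq_or_lt with h0 | hpos
    · simp [← h0, hq.nonneg w]
    · exact sub_le_mul_log_sub_mul_log hpos.le (hw hpos)
  have : ∫ w, (f w - q w) ∂P ≤ ∫ w, (f w * log (f w) - f w * log (q w)) ∂P :=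
    integral_mono_ae (hf.integrable.sub hq.integrable) (hSf.sub hfq) hpt
  rw [integral_sub hf.integrable hq.integrable, integral_sub hSf hfq, hf.integral_eq_one,
    hq.integral_eq_one] at this
  linarith

variable {Q : Measure Ω'} {F : Ω → ℝ} {G : Ω' → ℝ} {p : Ω → Ω'}

theorem integral_withDensity_ofReal (hFm : Measurable F) (hF0 : ∀ w, 0 ≤ F w)
    (φ : Ω → ℝ) :
    ∫ w, φ w ∂P.withDensity (fun w => ENNReal.ofReal (F w)) = ∫ w, F w * φ w ∂P := by
  rw [integral_withDensity_eq_integral_toReal_smul hFm.ennreal_ofReal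
    (ae_of_all _ fun _ => ENNReal.ofReal_lt_top)]
  simp_rw [ENNReal.toReal_ofReal (hF0 _), smul_eq_mul]

theorem integrable_withDensity_ofReal_iff (hFm : Measurable F) (hF0 : ∀ w, 0 ≤ F w)
    {φ : Ω → ℝ} :
    Integrable φ (P.withDensity fun w => ENNReal.ofReal (F w)) ↔
      Integrable (fun w => F w * φ w) P := by
  rw [integrable_withDensity_iff_integrable_smul' hFm.ennreal_ofReal
    (ae_of_all _ fun _ => ENNReal.ofReal_lt_top)]
  simp_rw [ENNReal.toReal_ofReal (hF0 _), smul_eq_mul]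

theorem IsProbDensity.comp_measurePreserving (hF : IsProbDensity P F) {e : Ω' → Ω}
    (he : MeasurePreserving e Q P) : IsProbDensity Q fun w => F (e w) where
  measurable := hF.measurable.comp he.measurable
  nonneg w := hF.nonneg (e w)
  integrable := (he.integrable_comp hF.measurable.aestronglyMeasurable).2 hF.integrable
  integral_eq_one := by
    rw [← hF.integral_eq_one, ← he.map_eq,
      integral_map he.measurable.aemeasurable hF.measurable.aestronglyMeasurable]

theorem entropy_comp_measurePreserving (hFm : Measurable F) {e : Ω' → Ω}
    (he : MeasurePreserving e Q P) : entropy Q (fun w => F (e w)) = entropy P F := by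
  rw [entropy, entropy, ← he.map_eq, integral_map he.measurable.aemeasurable
    (f := fun w => F w * log (F w)) (hFm.mul (measurable_log.comp hFm)).aestronglyMeasurable]

theorem IsProbDensity.of_forall_setIntegral_eq (hF : IsProbDensity P F) (hGm : Measurable G)
    (hG0 : ∀ y, 0 ≤ G y)
    (h : ∀ s, MeasurableSet s →
      ∫ y in s, G y ∂Q = ∫ w, s.indicator (fun _ => (1 : ℝ)) (p w) * F w ∂P) :
    IsProbDensity Q G := by
  have h1 : ∫ y, G y ∂Q = 1 := by
    simpa [hF.integral_eq_one] using h Set.univ MeasurableSet.univ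
  exact ⟨hGm, hG0, .of_integral_ne_zero (by simp [h1]), h1⟩

def HasMarginal (P : Measure Ω) (F : Ω → ℝ) (p : Ω → Ω') (Q : Measure Ω') (G : Ω' → ℝ) :
    Prop :=
  (P.withDensity fun w => ENNReal.ofReal (F w)).map p =
    Q.withDensity fun y => ENNReal.ofReal (G y)

theorem hasMarginal_of_forall_setIntegral_eq (hp : Measurable p) (hF : IsProbDensity P F)
    (hG : IsProbDensity Q G)
    (h : ∀ s, MeasurableSet s →
      ∫ y in s, G y ∂Q = ∫ w, s.indicator (fun _ => (1 : ℝ)) (p w) * F w ∂P) :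
    HasMarginal P F p Q G := by
  ext s hs
  rw [Measure.map_apply hp hs, withDensity_apply _ (hp hs), withDensity_apply _ hs,
    ← ofReal_integral_eq_lintegral_ofReal hF.integrable.integrableOn (ae_of_all _ hF.nonneg),
    ← ofReal_integral_eq_lintegral_ofReal hG.integrable.integrableOn (ae_of_all _ hG.nonneg),
    h s hs, ← integral_indicator (hp hs)]
  congr 2 with w
  by_cases hw : p w ∈ s <;> simp [hw]

namespace HasMarginal

variable (h : HasMarginal P F p Q G) (hp : Measurable p) (hF : IsProbDensity P F)
  (hG : IsProbDensity Q G)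
include h hp hF hG

theorem integral_mul_comp {φ : Ω' → ℝ} (hφ : Measurable φ) :
    ∫ w, F w * φ (p w) ∂P = ∫ y, G y * φ y ∂Q := by
  rw [← integral_withDensity_ofReal hF.measurable hF.nonneg,
    ← integral_withDensity_ofReal hG.measurable hG.nonneg, ← h,
    integral_map hp.aemeasurable hφ.aestronglyMeasurable]

theorem integrable_mul_comp_iff {φ : Ω' → ℝ} (hφ : Measurable φ) :
    Integrable (fun w => F w * φ (p w)) P ↔ Integrable (fun y => G y * φ y) Q := by
  rw [← integrable_withDensity_ofReal_iff hF.measurable hF.nonneg,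
    ← integrable_withDensity_ofReal_iff hG.measurable hG.nonneg, ← h,
    integrable_map_measure hφ.aestronglyMeasurable hp.aemeasurable, Function.comp_def]

theorem ae_pos_comp : ∀ᵐ w ∂P, 0 < F w → 0 < G (p w) := by
  have hs : MeasurableSet {y | G y ≤ 0} := hG.measurable measurableSet_Iic
  have hnull : (Q.withDensity fun y => ENNReal.ofReal (G y)) {y | G y ≤ 0} = 0 := by
    rw [withDensity_apply _ hs]
    exact setLIntegral_eq_zero hs fun y hy => ENNReal.ofReal_eq_zero.2 hy
  rw [← h, Measure.map_apply hp hs, measure_eq_zero_iff_ae_notMem,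
    ae_withDensity_iff hF.measurable.ennreal_ofReal] at hnull
  filter_upwards [hnull] with w hw hFw
  simpa using hw (ENNReal.ofReal_pos.2 hFw).ne'

theorem integrable_mul_log_comp (hSG : Integrable (fun y => G y * log (G y)) Q) :
    Integrable (fun w => F w * log (G (p w))) P :=
  (h.integrable_mul_comp_iff hp hF hG (measurable_log.comp hG.measurable)).2 hSG

theorem integral_mul_log_comp : ∫ w, F w * log (G (p w)) ∂P = -entropy Q G := by
  rw [h.integral_mul_comp hp hF hG (φ := fun y => log (G y)) (measurable_log.comp hG.measurable),
    entropy, neg_neg]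

end HasMarginal

end Density

section Product

variable {X ι : Type*} [MeasurableSpace X] [Fintype ι] {Y : ι → Type*}
  [∀ i, MeasurableSpace (Y i)] {μ : Measure X} {ν : ∀ i, Measure (Y i)}
  {a : X → ℝ} {b : ∀ i, Y i → ℝ}

def productDensity (a : X → ℝ) (b : ∀ i, Y i → ℝ) : X × (∀ i, Y i) → ℝ :=
  fun w => a w.1 * ∏ i, b i (w.2 i)

section Marginals

variable {f : X × (∀ i, Y i) → ℝ} (hf : IsProbDensity (μ.prod (Measure.pi ν)) f)
  (ha : IsProbDensity μ a) (hb : ∀ i, IsProbDensity (ν i) (b i))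
  (hfa : HasMarginal (μ.prod (Measure.pi ν)) f Prod.fst μ a)
  (hfb : ∀ i, HasMarginal (μ.prod (Measure.pi ν)) f (fun w => w.2 i) (ν i) (b i))
include hf ha hb hfa hfb

theorem ae_pos_marginals :
    ∀ᵐ w ∂μ.prod (Measure.pi ν), 0 < f w → 0 < a w.1 ∧ ∀ i, 0 < b i (w.2 i) := by
  filter_upwards [hfa.ae_pos_comp measurable_fst hf ha, ae_all_iff.2 fun i =>
    (hfb i).ae_pos_comp ((measurable_pi_apply i).comp measurable_snd) hf (hb i)] with w hwa hwb
  exact fun hw => ⟨hwa hw, fun i => hwb i hw⟩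

theorem mul_log_productDensity_ae_eq :
    (fun w => f w * log (productDensity a b w)) =ᵐ[μ.prod (Measure.pi ν)]
      fun w => f w * log (a w.1) + ∑ i, f w * log (b i (w.2 i)) := by
  filter_upwards [ae_pos_marginals hf ha hb hfa hfb] with w hw
  rcases (hf.nonneg w).eq_or_lt with h0 | hpos
  · simp [← h0]
  · obtain ⟨hwa, hwb⟩ := hw hpos
    rw [productDensity, log_mul hwa.ne' (Finset.prod_pos fun i _ => hwb i).ne',
      log_prod fun i _ => (hwb i).ne', mul_add, Finset.mul_sum]

variable (hSa : Integrable (fun x => a x * log (a x)) μ)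
  (hSb : ∀ i, Integrable (fun y => b i y * log (b i y)) (ν i))
include hSa hSb

theorem integrable_mul_log_productDensity :
    Integrable (fun w => f w * log (productDensity a b w)) (μ.prod (Measure.pi ν)) := by
  refine Integrable.congr ?_ (mul_log_productDensity_ae_eq hf ha hb hfa hfb).symm
  exact (hfa.integrable_mul_log_comp measurable_fst hf ha hSa).add <|
    integrable_finsetSum _ fun i _ =>
      (hfb i).integrable_mul_log_comp ((measurable_pi_apply i).comp measurable_snd) hf (hb i)
        (hSb i)

theorem integral_mul_log_productDensity :
    ∫ w, f w * log (productDensity a b w) ∂μ.prod (Measure.pi ν) =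
      -(entropy μ a + ∑ i, entropy (ν i) (b i)) := by
  have hA := hfa.integrable_mul_log_comp measurable_fst hf ha hSa
  have hB := fun i => (hfb i).integrable_mul_log_comp
    ((measurable_pi_apply i).comp measurable_snd) hf (hb i) (hSb i)
  rw [integral_congr_ae (mul_log_productDensity_ae_eq hf ha hb hfa hfb),
    integral_add hA (integrable_finsetSum _ fun i _ => hB i),
    integral_finsetSum _ fun i _ => hB i, hfa.integral_mul_log_comp measurable_fst hf ha,
    Finset.sum_congr rfl fun i _ => (hfb i).integral_mul_log_comp
      ((measurable_pi_apply i).comp measurable_snd) hf (hb i), Finset.sum_neg_distrib, neg_add]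

end Marginals

variable [SigmaFinite μ] [∀ i, SigmaFinite (ν i)]

theorem integral_comp_eval_mul_prod (hb : ∀ i, ∫ y, b i y ∂ν i = 1) (j : ι)
    (φ : Y j → ℝ) :
    ∫ y, φ (y j) * ∏ i, b i (y i) ∂Measure.pi ν = ∫ y, φ y * b j y ∂ν j := by
  classical
  set c := Function.update b j fun t => φ t * b j t
  have hc : ∀ y : ∀ i, Y i, φ (y j) * ∏ i, b i (y i) = ∏ i, c i (y i) := fun y => by
    rw [← Finset.mul_prod_erase _ _ (Finset.mem_univ j),
      ← Finset.mul_prod_erase _ (fun i => c i (y i)) (Finset.mem_univ j)]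
    simp only [c, Function.update_self, mul_assoc]
    congr 2
    exact Finset.prod_congr rfl fun i hi => by
      rw [Function.update_of_ne (Finset.ne_of_mem_erase hi)]
  simp_rw [hc, integral_fintype_prod_eq_prod]
  rw [← Finset.mul_prod_erase _ _ (Finset.mem_univ j)]
  simp only [c, Function.update_self]
  rw [Finset.prod_eq_one fun i hi => by
    rw [Function.update_of_ne (Finset.ne_of_mem_erase hi), hb], mul_one]

theorem IsProbDensity.productDensity (ha : IsProbDensity μ a)
    (hb : ∀ i, IsProbDensity (ν i) (b i)) :
    IsProbDensity (μ.prod (Measure.pi ν)) (productDensity a b) where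
  measurable := (ha.measurable.comp measurable_fst).mul <| Finset.measurable_prod _ fun i _ =>
    (hb i).measurable.comp ((measurable_pi_apply i).comp measurable_snd)
  nonneg w := mul_nonneg (ha.nonneg _) (Finset.prod_nonneg fun i _ => (hb i).nonneg _)
  integrable := ha.integrable.mul_prod (Integrable.fintype_prod_dep fun i => (hb i).integrable)
  integral_eq_one := by
    refine (integral_prod_mul (f := a) (g := fun y : ∀ i, Y i => ∏ i, b i (y i))).trans ?_
    rw [integral_fintype_prod_eq_prod, ha.integral_eq_one]
    simp [(hb _).integral_eq_one]

theorem hasMarginal_productDensity_fst (ha : IsProbDensity μ a)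
    (hb : ∀ i, IsProbDensity (ν i) (b i)) :
    HasMarginal (μ.prod (Measure.pi ν)) (productDensity a b) Prod.fst μ a := by
  refine hasMarginal_of_forall_setIntegral_eq measurable_fst (ha.productDensity hb) ha
    fun s hs => ?_
  calc ∫ x in s, a x ∂μ
      = (∫ x, s.indicator (fun _ => 1) x * a x ∂μ) * ∫ y, ∏ i, b i (y i) ∂Measure.pi ν := by
        simp [integral_fintype_prod_eq_prod, (hb _).integral_eq_one, Set.indicator_one_mul,
          integral_indicator hs]
    _ = _ := by
        rw [← integral_prod_mul]
        simp only [productDensity, mul_assoc]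

theorem hasMarginal_productDensity_eval (ha : IsProbDensity μ a)
    (hb : ∀ i, IsProbDensity (ν i) (b i)) (j : ι) :
    HasMarginal (μ.prod (Measure.pi ν)) (productDensity a b) (fun w => w.2 j) (ν j) (b j) := by
  refine hasMarginal_of_forall_setIntegral_eq ((measurable_pi_apply j).comp measurable_snd)
    (ha.productDensity hb) (hb j) fun s hs => ?_
  calc ∫ y in s, b j y ∂ν j
      = (∫ x, a x ∂μ) *
          ∫ y, s.indicator (fun _ => 1) (y j) * ∏ i, b i (y i) ∂Measure.pi ν := by
        rw [integral_comp_eval_mul_prod (fun i => (hb i).integral_eq_one), ha.integral_eq_one,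
          one_mul]
        simp [Set.indicator_one_mul, integral_indicator hs]
    _ = _ := by
        rw [← integral_prod_mul]
        simp only [productDensity, mul_left_comm]

theorem entropy_productDensity (ha : IsProbDensity μ a) (hb : ∀ i, IsProbDensity (ν i) (b i))
    (hSa : Integrable (fun x => a x * log (a x)) μ)
    (hSb : ∀ i, Integrable (fun y => b i y * log (b i y)) (ν i)) :
    entropy (μ.prod (Measure.pi ν)) (productDensity a b) =
      entropy μ a + ∑ i, entropy (ν i) (b i) := by
  rw [entropy, integral_mul_log_productDensity (ha.productDensity hb) ha hb
    (hasMarginal_productDensity_fst ha hb) (hasMarginal_productDensity_eval ha hb) hSa hSb,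
    neg_neg]

theorem entropy_le_of_hasMarginal {f : X × (∀ i, Y i) → ℝ}
    (hf : IsProbDensity (μ.prod (Measure.pi ν)) f)
    (ha : IsProbDensity μ a) (hb : ∀ i, IsProbDensity (ν i) (b i))
    (hfa : HasMarginal (μ.prod (Measure.pi ν)) f Prod.fst μ a)
    (hfb : ∀ i, HasMarginal (μ.prod (Measure.pi ν)) f (fun w => w.2 i) (ν i) (b i))
    (hSa : Integrable (fun x => a x * log (a x)) μ)
    (hSb : ∀ i, Integrable (fun y => b i y * log (b i y)) (ν i))
    (hSf : Integrable (fun w => f w * log (f w)) (μ.prod (Measure.pi ν))) :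
    entropy (μ.prod (Measure.pi ν)) f ≤ entropy μ a + ∑ i, entropy (ν i) (b i) := by
  have hpd := ha.productDensity hb
  have hsupp : ∀ᵐ w ∂μ.prod (Measure.pi ν), 0 < f w → 0 < productDensity a b w := by
    filter_upwards [ae_pos_marginals hf ha hb hfa hfb] with w hw hpos
    obtain ⟨hwa, hwb⟩ := hw hpos
    exact mul_pos hwa (Finset.prod_pos fun i _ => hwb i)
  have hgibbs := hf.integral_mul_log_le hpd hsupp hSf
    (integrable_mul_log_productDensity hf ha hb hfa hfb hSa hSb)
  rw [integral_mul_log_productDensity hf ha hb hfa hfb hSa hSb] at hgibbs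
  rw [entropy]
  linarith

end Product

section Canonical

variable {Y : Type*} [MeasurableSpace Y] {ν : Measure Y} {β : ℝ} {H : Y → ℝ}

noncomputable def canonicalDensity (ν : Measure Y) (β : ℝ) (H : Y → ℝ) (y : Y) : ℝ :=
  (∫ y', exp (-β * H y') ∂ν)⁻¹ * exp (-β * H y)

variable (hZ : 0 < ∫ y, exp (-β * H y) ∂ν)
include hZ

theorem isProbDensity_canonicalDensity (hH : Measurable H)
    (hexp : Integrable (fun y => exp (-β * H y)) ν) :
    IsProbDensity ν (canonicalDensity ν β H) where
  measurable := measurable_const.mul (measurable_exp.comp (hH.const_mul _))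
  nonneg y := mul_nonneg (inv_nonneg.2 hZ.le) (exp_pos _).le
  integrable := hexp.const_mul _
  integral_eq_one := by
    simp only [canonicalDensity]
    rw [integral_const_mul, inv_mul_cancel₀ hZ.ne']

theorem mul_log_canonicalDensity (q : Y → ℝ) :
    (fun y => q y * log (canonicalDensity ν β H y)) =
      fun y => -log (∫ y', exp (-β * H y') ∂ν) * q y - β * (H y * q y) := by
  ext y
  rw [canonicalDensity, log_mul (inv_ne_zero hZ.ne') (exp_ne_zero _), log_inv, log_exp]
  ring

theorem integral_mul_log_canonicalDensity {q : Y → ℝ} (hq : IsProbDensity ν q)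
    (hHq : Integrable (fun y => H y * q y) ν) :
    ∫ y, q y * log (canonicalDensity ν β H y) ∂ν =
      -log (∫ y, exp (-β * H y) ∂ν) - β * ∫ y, H y * q y ∂ν := by
  rw [mul_log_canonicalDensity hZ, integral_sub (hq.integrable.const_mul _) (hHq.const_mul _),
    integral_const_mul, integral_const_mul, hq.integral_eq_one, mul_one]

theorem free_energy_canonicalDensity_le (hH : Measurable H)
    (hexp : Integrable (fun y => exp (-β * H y)) ν) {q : Y → ℝ} (hq : IsProbDensity ν q)
    (hHg : Integrable (fun y => H y * canonicalDensity ν β H y) ν)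
    (hHq : Integrable (fun y => H y * q y) ν) (hSq : Integrable (fun y => q y * log (q y)) ν) :
    β * ∫ y, H y * canonicalDensity ν β H y ∂ν - entropy ν (canonicalDensity ν β H) ≤
      β * ∫ y, H y * q y ∂ν - entropy ν q := by
  have hg := isProbDensity_canonicalDensity hZ hH hexp
  have hgibbs := hq.integral_mul_log_le hg
    (ae_of_all _ fun y _ => mul_pos (inv_pos.2 hZ) (exp_pos _)) hSq
    (by rw [mul_log_canonicalDensity hZ]; exact (hq.integrable.const_mul _).sub (hHq.const_mul _))
  rw [integral_mul_log_canonicalDensity hZ hq hHq] at hgibbs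
  rw [entropy, entropy, integral_mul_log_canonicalDensity hZ hg hHg]
  linarith

end Canonical

theorem statistical_second_law_general
    {X : Type*} [MeasurableSpace X] (μ : Measure X) [SigmaFinite μ]
    (m : ℕ) {Y : Fin m → Type*} [∀ i, MeasurableSpace (Y i)]
    (ν : ∀ i, Measure (Y i)) [∀ i, SigmaFinite (ν i)]
    (H : ∀ i, Y i → ℝ) (hH : ∀ i, Measurable (H i))
    (β : Fin m → ℝ)
    (hexp : ∀ i, Integrable (fun y => Real.exp (-β i * H i y)) (ν i))
    (Z : Fin m → ℝ) (hZ : ∀ i, Z i = ∫ y, Real.exp (-β i * H i y) ∂(ν i))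
    (hZpos : ∀ i, 0 < Z i)
    (g : ∀ i, Y i → ℝ) (hg : ∀ i, g i = fun y => (Z i)⁻¹ * Real.exp (-β i * H i y))
    -- the initial density of the system A
    (fA : X → ℝ) (hfAm : Measurable fA) (hfA0 : ∀ x, 0 ≤ fA x)
    (hfAi : Integrable fA μ) (hfA1 : (∫ x, fA x ∂μ) = 1)
    -- initial joint density: product (no initial correlations)
    (f₀ : X × (∀ i, Y i) → ℝ) (hf₀ : f₀ = fun w => fA w.1 * ∏ i, g i (w.2 i))
    -- Hamiltonian evolution: a measure-preserving measurable equivalence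
    (Φ : (X × (∀ i, Y i)) ≃ᵐ (X × (∀ i, Y i)))
    (hΦ : MeasurePreserving Φ (μ.prod (Measure.pi ν)) (μ.prod (Measure.pi ν)))
    (f₁ : X × (∀ i, Y i) → ℝ) (hf₁ : f₁ = fun w => f₀ (Φ.symm w))
    -- final marginal density of the system A
    (fA' : X → ℝ) (hfA'm : Measurable fA') (hfA'0 : ∀ x, 0 ≤ fA' x)
    (hfA'marg : ∀ s : Set X, MeasurableSet s →
      (∫ x in s, fA' x ∂μ) =
        ∫ w, s.indicator (fun _ => (1 : ℝ)) w.1 * f₁ w ∂(μ.prod (Measure.pi ν)))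
    -- final marginal densities of the reservoirs
    (g' : ∀ i, Y i → ℝ) (hg'm : ∀ i, Measurable (g' i)) (hg'0 : ∀ i y, 0 ≤ g' i y)
    (hg'marg : ∀ i, ∀ s : Set (Y i), MeasurableSet s →
      (∫ y in s, g' i y ∂(ν i)) =
        ∫ w, s.indicator (fun _ => (1 : ℝ)) (w.2 i) * f₁ w ∂(μ.prod (Measure.pi ν)))
    -- finiteness of the entropy integrals
    (hSfA : Integrable (fun x => fA x * Real.log (fA x)) μ)
    (hSfA' : Integrable (fun x => fA' x * Real.log (fA' x)) μ)
    (hSg : ∀ i, Integrable (fun y => g i y * Real.log (g i y)) (ν i))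
    (hSg' : ∀ i, Integrable (fun y => g' i y * Real.log (g' i y)) (ν i))
    (hSf₁ : Integrable (fun w => f₁ w * Real.log (f₁ w)) (μ.prod (Measure.pi ν)))
    -- finiteness of the energy integrals
    (hEg : ∀ i, Integrable (fun y => H i y * g i y) (ν i))
    (hEg' : ∀ i, Integrable (fun y => H i y * g' i y) (ν i))
    -- expected heat gained by the system from reservoir i
    (Q : Fin m → ℝ)
    (hQ : ∀ i, Q i = (∫ y, H i y * g i y ∂(ν i)) - ∫ y, H i y * g' i y ∂(ν i))
    -- the process is cyclic: the system's marginal distribution is restored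
    (hcyclic : fA' =ᵐ[μ] fA) :
    ∑ i, β i * Q i ≤ 0 := by
  have hZ' i : 0 < ∫ y, Real.exp (-β i * H i y) ∂(ν i) := hZ i ▸ hZpos i
  have hgc i : g i = canonicalDensity (ν i) (β i) (H i) := (hg i).trans (by rw [hZ i]; rfl)
  have hgd i : IsProbDensity (ν i) (g i) :=
    hgc i ▸ isProbDensity_canonicalDensity (hZ' i) (hH i) (hexp i)
  subst hf₀ hf₁
  have hfAd : IsProbDensity μ fA := ⟨hfAm, hfA0, hfAi, hfA1⟩
  have hf₀d := hfAd.productDensity hgd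
  have hΦ' := hΦ.symm Φ
  have hf₁d := hf₀d.comp_measurePreserving hΦ'
  have hfA'd := hf₁d.of_forall_setIntegral_eq hfA'm hfA'0 hfA'marg
  have hg'd i := hf₁d.of_forall_setIntegral_eq (hg'm i) (hg'0 i) (hg'marg i)
  have hsubadd := entropy_le_of_hasMarginal hf₁d hfA'd hg'd
    (hasMarginal_of_forall_setIntegral_eq measurable_fst hf₁d hfA'd hfA'marg)
    (fun i => hasMarginal_of_forall_setIntegral_eq ((measurable_pi_apply i).comp measurable_snd)
      hf₁d (hg'd i) (hg'marg i)) hSfA' hSg' hSf₁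
  rw [entropy_comp_measurePreserving hf₀d.measurable hΦ',
    entropy_productDensity hfAd hgd hSfA hSg] at hsubadd
  have hcyc : entropy μ fA' = entropy μ fA :=
    congrArg Neg.neg (integral_congr_ae (hcyclic.fun_comp fun t => t * Real.log t))
  have hres i : β i * Q i ≤ entropy (ν i) (g i) - entropy (ν i) (g' i) := by
    have := free_energy_canonicalDensity_le (hZ' i) (hH i) (hexp i) (hg'd i)
      (hgc i ▸ hEg i) (hEg' i) (hSg' i)
    rw [← hgc i] at this
    rw [hQ i]
    linarith
  calc ∑ i, β i * Q i
      ≤ ∑ i, (entropy (ν i) (g i) - entropy (ν i) (g' i)) := Finset.sum_le_sum fun i _ => hres i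
    _ ≤ 0 := by
        rw [Finset.sum_sub_distrib]
        linarith

/-- The statistical second law: in the setting of the classical Fundamental Theorem,
if the process is cyclic (the final marginal density of the system equals the initial
one almost everywhere), then the sum over reservoirs of
(expected heat gained)/(temperature) is not positive: `∑ i, β i * Q i ≤ 0`. -/
theorem statistical_second_law
    {X : Type*} [MeasurableSpace X] (μ : Measure X) [SigmaFinite μ]
    (m : ℕ) {Y : Fin m → Type*} [∀ i, MeasurableSpace (Y i)]
    (ν : ∀ i, Measure (Y i)) [∀ i, SigmaFinite (ν i)]
    (H : ∀ i, Y i → ℝ) (hH : ∀ i, Measurable (H i))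
    (β : Fin m → ℝ) (hβ : ∀ i, 0 < β i)
    (hexp : ∀ i, Integrable (fun y => Real.exp (-β i * H i y)) (ν i))
    (Z : Fin m → ℝ) (hZ : ∀ i, Z i = ∫ y, Real.exp (-β i * H i y) ∂(ν i))
    (hZpos : ∀ i, 0 < Z i)
    (g : ∀ i, Y i → ℝ) (hg : ∀ i, g i = fun y => (Z i)⁻¹ * Real.exp (-β i * H i y))
    -- the initial density of the system A
    (fA : X → ℝ) (hfAm : Measurable fA) (hfA0 : ∀ x, 0 ≤ fA x)
    (hfAi : Integrable fA μ) (hfA1 : (∫ x, fA x ∂μ) = 1)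
    -- initial joint density: product (no initial correlations)
    (f₀ : X × (∀ i, Y i) → ℝ) (hf₀ : f₀ = fun w => fA w.1 * ∏ i, g i (w.2 i))
    -- Hamiltonian evolution: a measure-preserving measurable equivalence
    (Φ : (X × (∀ i, Y i)) ≃ᵐ (X × (∀ i, Y i)))
    (hΦ : MeasurePreserving Φ (μ.prod (Measure.pi ν)) (μ.prod (Measure.pi ν)))
    (f₁ : X × (∀ i, Y i) → ℝ) (hf₁ : f₁ = fun w => f₀ (Φ.symm w))
    -- final marginal density of the system A
    (fA' : X → ℝ) (hfA'm : Measurable fA') (hfA'0 : ∀ x, 0 ≤ fA' x)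
    (hfA'marg : ∀ s : Set X, MeasurableSet s →
      (∫ x in s, fA' x ∂μ) =
        ∫ w, s.indicator (fun _ => (1 : ℝ)) w.1 * f₁ w ∂(μ.prod (Measure.pi ν)))
    -- final marginal densities of the reservoirs
    (g' : ∀ i, Y i → ℝ) (hg'm : ∀ i, Measurable (g' i)) (hg'0 : ∀ i y, 0 ≤ g' i y)
    (hg'marg : ∀ i, ∀ s : Set (Y i), MeasurableSet s →
      (∫ y in s, g' i y ∂(ν i)) =
        ∫ w, s.indicator (fun _ => (1 : ℝ)) (w.2 i) * f₁ w ∂(μ.prod (Measure.pi ν)))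
    -- finiteness of the entropy integrals
    (hSfA : Integrable (fun x => fA x * Real.log (fA x)) μ)
    (hSfA' : Integrable (fun x => fA' x * Real.log (fA' x)) μ)
    (hSg : ∀ i, Integrable (fun y => g i y * Real.log (g i y)) (ν i))
    (hSg' : ∀ i, Integrable (fun y => g' i y * Real.log (g' i y)) (ν i))
    (hSf₁ : Integrable (fun w => f₁ w * Real.log (f₁ w)) (μ.prod (Measure.pi ν)))
    -- finiteness of the energy integrals
    (hEg : ∀ i, Integrable (fun y => H i y * g i y) (ν i))
    (hEg' : ∀ i, Integrable (fun y => H i y * g' i y) (ν i))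
    -- expected heat gained by the system from reservoir i
    (Q : Fin m → ℝ)
    (hQ : ∀ i, Q i = (∫ y, H i y * g i y ∂(ν i)) - ∫ y, H i y * g' i y ∂(ν i))
    -- the process is cyclic: the system's marginal distribution is restored
    (hcyclic : fA' =ᵐ[μ] fA) :
    ∑ i, β i * Q i ≤ 0 :=
  statistical_second_law_general μ m ν H hH β hexp Z hZ hZpos g hg fA hfAm hfA0 hfAi hfA1 f₀ hf₀ Φ
    hΦ f₁ hf₁ fA' hfA'm hfA'0 hfA'marg g' hg'm hg'0 hg'marg hSfA hSfA' hSg hSg' hSf₁ hEg hEg' Q hQ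
    hcyclic
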